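/- If an m×n matrix M' over Σ is fair w.r.t. γ, then c̃ · |types(M') \ types(M)| ≤ d(M,M'); that is, creating each new type (a type of M' that is not a type of M) accounts for at least c̃ edited rows, since its cluster in M' is a nonempty fair set of size at least c̃ all of whose rows differ between M and M'. -/

import Mathlib

variable {m n c : ℕ} {A : Type*} [Fintype A] [DecidableEq A]

/-- The set of distinct row types of a matrix. -/
def types (M : Fin m → Fin n → A) : Finset (Fin n → A) :=
  Finset.univ.image (fun i => M i)

/-- The number of distinct rows of a matrix. -/
def dr (M : Fin m → Fin n → A) : ℕ := (types M).card

/-- The cluster of a type `τ` in `M`: the set of rows whose type is `τ`. -/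
def cluster (M : Fin m → Fin n → A) (τ : Fin n → A) : Finset (Fin m) :=
  Finset.univ.filter (fun i => M i = τ)

/-- The edit cost between two matrices: the number of positions where they differ. -/
def editCost (M M' : Fin m → Fin n → A) : ℕ :=
  ((Finset.univ : Finset (Fin m × Fin n)).filter (fun p => M p.1 p.2 ≠ M' p.1 p.2)).card

/-- The number of occurrences of color `z` in the coloring `γ`. -/
def colorCount (γ : Fin m → Fin c) (z : Fin c) : ℕ :=
  (Finset.univ.filter (fun i => γ i = z)).card

/-- A set of rows is fair w.r.t. `γ` if it witnesses the same color distribution as `γ`. -/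
def fairSet (γ : Fin m → Fin c) (S : Finset (Fin m)) : Prop :=
  ∀ z : Fin c, m * (S.filter (fun i => γ i = z)).card = colorCount γ z * S.card

/-- A matrix is fair if the cluster of each of its types is fair. -/
def fairMatrix (γ : Fin m → Fin c) (M' : Fin m → Fin n → A) : Prop :=
  ∀ τ ∈ types M', fairSet γ (cluster M' τ)

/-- The fairlet size `c̃ = m / gcd(|γ|_1, …, |γ|_c)`. -/
def fairletSize (γ : Fin m → Fin c) : ℕ :=
  m / Finset.univ.gcd (colorCount γ)
/-!
The cluster of a new type `τ` of `M'` is a nonempty fair set `S`, so `m ∣ |γ|_z · |S|` for every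
colour `z`, hence `m ∣ gcd_z |γ|_z · |S|`, i.e. `c̃ ∣ |S|`. Every row of `S` is edited, since
otherwise `τ` would already be a type of `M`; and each edited row costs at least one entry.
-/

open Finset

section Fairness

variable {m c : ℕ} {γ : Fin m → Fin c} {S : Finset (Fin m)}

theorem sum_colorCount (γ : Fin m → Fin c) : ∑ z, colorCount γ z = m := by
  simpa [colorCount] using (card_eq_sum_card_fiberwise (s := univ) (t := univ) (f := γ)
    fun _ _ => mem_univ _).symm

theorem gcd_colorCount_dvd (γ : Fin m → Fin c) : univ.gcd (colorCount γ) ∣ m := by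
  simpa only [sum_colorCount] using
    dvd_sum (s := univ) fun z _ => gcd_dvd (f := colorCount γ) (mem_univ z)

theorem fairSet.dvd_gcd_colorCount_mul_card (hS : fairSet γ S) :
    m ∣ univ.gcd (colorCount γ) * #S := by
  rw [← normalize_eq #S, ← Finset.gcd_mul_right]
  exact Finset.dvd_gcd fun z _ => ⟨_, (hS z).symm⟩

theorem fairSet.fairletSize_le_card (hS : fairSet γ S) (hne : S.Nonempty) :
    fairletSize γ ≤ #S := by
  obtain hg | hg := Nat.eq_zero_or_pos (univ.gcd (colorCount γ))
  · simp [fairletSize, hg] -- `m / 0 = 0`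
  · exact Nat.le_of_dvd hne.card_pos
      ((Nat.div_dvd_iff_dvd_mul (gcd_colorCount_dvd γ) hg).2 hS.dvd_gcd_colorCount_mul_card)

end Fairness

section Rows

variable {m n : ℕ} {α : Type*} [DecidableEq α]

theorem editCost_eq_sum_hammingDist (M M' : Fin m → Fin n → α) :
    editCost M M' = ∑ i, hammingDist (M i) (M' i) := by
  simp only [editCost, hammingDist, card_filter, Fintype.sum_prod_type]

theorem hammingDist_le_editCost (M M' : Fin m → Fin n → α) :
    hammingDist M M' ≤ editCost M M' := by
  rw [editCost_eq_sum_hammingDist, hammingDist, card_filter]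
  exact sum_le_sum fun i _ => by
    split_ifs with h
    exacts [hammingDist_pos.2 h, Nat.zero_le _]

theorem cluster_nonempty_of_mem_types {M : Fin m → Fin n → α} {τ : Fin n → α}
    (hτ : τ ∈ types M) : (cluster M τ).Nonempty := by
  obtain ⟨i, -, rfl⟩ := mem_image.1 hτ
  exact ⟨i, by simp [cluster]⟩

theorem sum_card_cluster (M : Fin m → Fin n → α) (T : Finset (Fin n → α)) :
    ∑ τ ∈ T, #(cluster M τ) = #{i | M i ∈ T} := by
  rw [card_eq_sum_card_fiberwise (f := M) (s := {i | M i ∈ T}) (t := T)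
    fun i hi => (mem_filter.1 hi).2]
  refine sum_congr rfl fun τ hτ => congrArg card ?_
  ext i
  simp only [cluster, mem_filter, mem_univ, true_and]
  exact ⟨fun h => ⟨h ▸ hτ, h⟩, And.right⟩

theorem sum_card_cluster_sdiff_types_le_hammingDist (M M' : Fin m → Fin n → α) :
    ∑ τ ∈ types M' \ types M, #(cluster M' τ) ≤ hammingDist M M' := by
  rw [sum_card_cluster, hammingDist]
  refine card_le_card fun i hi => ?_
  simp only [mem_filter, mem_univ, true_and, mem_sdiff] at hi ⊢
  exact fun h => hi.2 (h ▸ mem_image_of_mem M (mem_univ i))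

end Rows

theorem fairletSize_mul_new_types_le_editCost_general
    (γ : Fin m → Fin c)
    (M M' : Fin m → Fin n → A) (h : fairMatrix γ M') :
    fairletSize γ * (types M' \ types M).card ≤ editCost M M' :=
  calc fairletSize γ * #(types M' \ types M)
      = ∑ _τ ∈ types M' \ types M, fairletSize γ := by rw [sum_const, smul_eq_mul, mul_comm]
    _ ≤ ∑ τ ∈ types M' \ types M, #(cluster M' τ) := sum_le_sum fun τ hτ =>
        have hτ' := (mem_sdiff.1 hτ).1
        (h τ hτ').fairletSize_le_card (cluster_nonempty_of_mem_types hτ')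
    _ ≤ hammingDist M M' := sum_card_cluster_sdiff_types_le_hammingDist M M'
    _ ≤ editCost M M' := hammingDist_le_editCost M M'

/-- Each new type of a fair matrix accounts for at least `c̃` edited rows. -/
theorem fairletSize_mul_new_types_le_editCost (hm : 0 < m) (hn : 0 < n)
    (γ : Fin m → Fin c) (hγ : Function.Surjective γ)
    (M M' : Fin m → Fin n → A) (h : fairMatrix γ M') :
    fairletSize γ * (types M' \ types M).card ≤ editCost M M' :=
  fairletSize_mul_new_types_le_editCost_general γ M M' h
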